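/- arXiv:2605.13503 — 4 statements merged into one kernel-verified Lean document; each statement's English description precedes it below -/
import Mathlib

section
/- Let n₁, n₂ be positive integers, n = n₁ + n₂, and 0 < ε₁ ≤ ε₂. Define MSE_thr = min(1/(4n) + 2/(nε₁)², 1/(4n₂) + 2/(n₂ε₂)²), R = 1 + 8/(n₁ε₁²), and MSE_aff = (n₁ε₁² + n₂ε₂² + 8)/(4(n₁ε₁ + n₂ε₂)²) if ε₂ ≤ Rε₁ and MSE_aff = R/(4(n₁ + n₂R)) otherwise. Then MSE_thr ≤ 4 · MSE_aff. -/
theorem two_level_factor_four (n₁ n₂ : ℕ) (h₁ : 0 < n₁) (h₂ : 0 < n₂)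
    (ε₁ ε₂ : ℝ) (hε₁ : 0 < ε₁) (h12 : ε₁ ≤ ε₂) :
    let n : ℝ := (n₁ : ℝ) + (n₂ : ℝ)
    let MSEthr : ℝ := min (1 / (4 * n) + 2 / (n * ε₁) ^ 2)
      (1 / (4 * (n₂ : ℝ)) + 2 / ((n₂ : ℝ) * ε₂) ^ 2)
    let R : ℝ := 1 + 8 / ((n₁ : ℝ) * ε₁ ^ 2)
    let MSEaff : ℝ :=
      if ε₂ ≤ R * ε₁ then
        ((n₁ : ℝ) * ε₁ ^ 2 + (n₂ : ℝ) * ε₂ ^ 2 + 8) / (4 * ((n₁ : ℝ) * ε₁ + (n₂ : ℝ) * ε₂) ^ 2)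
      else R / (4 * ((n₁ : ℝ) + (n₂ : ℝ) * R))
    MSEthr ≤ 4 * MSEaff := by
  intro n MSEthr R MSEaff
  have hp : (0:ℝ) < (n₁:ℝ) := by exact_mod_cast h₁
  have hq : (0:ℝ) < (n₂:ℝ) := by exact_mod_cast h₂
  have hε₂ : (0:ℝ) < ε₂ := lt_of_lt_of_le hε₁ h12
  have hn : (0:ℝ) < n := by simp only [n]; linarith
  have hR : (0:ℝ) < R := by
    have h8 : (0:ℝ) < 8 / ((n₁:ℝ) * ε₁ ^ 2) := by positivity
    simp only [R]; linarith
  have hnp : (n₁:ℝ) ≤ n := by simp only [n]; linarith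
  have step1 : 1 / (4 * n) + 2 / (n * ε₁) ^ 2
      ≤ 1 / (4 * (n₁:ℝ)) + 2 / ((n₁:ℝ) * ε₁) ^ 2 := by
    gcongr
  simp only [MSEthr, MSEaff]
  by_cases hc : ε₂ ≤ R * ε₁
  · rw [if_pos hc]
    have hD : (0:ℝ) < ((n₁:ℝ) * ε₁ + (n₂:ℝ) * ε₂) ^ 2 := by positivity
    have e2 : 4 * (((n₁:ℝ) * ε₁ ^ 2 + (n₂:ℝ) * ε₂ ^ 2 + 8) /
        (4 * ((n₁:ℝ) * ε₁ + (n₂:ℝ) * ε₂) ^ 2))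
        = ((n₁:ℝ) * ε₁ ^ 2 + (n₂:ℝ) * ε₂ ^ 2 + 8) /
          (((n₁:ℝ) * ε₁ + (n₂:ℝ) * ε₂) ^ 2) := by
      field_simp
    rw [e2]
    rcases le_total ((n₂:ℝ) * ε₂) ((n₁:ℝ) * ε₁) with hAB | hAB
    · refine le_trans (min_le_left _ _) (le_trans step1 ?_)
      have e1 : 1 / (4 * (n₁:ℝ)) + 2 / ((n₁:ℝ) * ε₁) ^ 2
          = ((n₁:ℝ) * ε₁ ^ 2 + 8) / (4 * ((n₁:ℝ) * ε₁) ^ 2) := by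
        field_simp; ring
      rw [e1, div_le_div_iff₀ (by positivity) hD]
      nlinarith [mul_nonneg (mul_nonneg hq.le (sq_nonneg ε₂)) (sq_nonneg ((n₁:ℝ) * ε₁)),
        mul_nonneg (sub_nonneg.2 hAB) (by positivity : (0:ℝ) ≤ 3 * ((n₁:ℝ) * ε₁) + (n₂:ℝ) * ε₂),
        mul_pos hp (pow_pos hε₁ 2)]
    · refine le_trans (min_le_right _ _) ?_
      have e1 : 1 / (4 * (n₂:ℝ)) + 2 / ((n₂:ℝ) * ε₂) ^ 2
          = ((n₂:ℝ) * ε₂ ^ 2 + 8) / (4 * ((n₂:ℝ) * ε₂) ^ 2) := by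
        field_simp; ring
      rw [e1, div_le_div_iff₀ (by positivity) hD]
      nlinarith [mul_nonneg (mul_nonneg hp.le (sq_nonneg ε₁)) (sq_nonneg ((n₂:ℝ) * ε₂)),
        mul_nonneg (sub_nonneg.2 hAB) (by positivity : (0:ℝ) ≤ 3 * ((n₂:ℝ) * ε₂) + (n₁:ℝ) * ε₁)]
  · rw [if_neg hc]
    have hX : (0:ℝ) < (n₁:ℝ) + (n₂:ℝ) * R := by positivity
    have e2 : 4 * (R / (4 * ((n₁:ℝ) + (n₂:ℝ) * R))) = R / ((n₁:ℝ) + (n₂:ℝ) * R) := by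
      field_simp
    rw [e2]
    have hce : R * ε₁ < ε₂ := lt_of_not_ge hc
    rcases le_total ((n₂:ℝ) * R) (n₁:ℝ) with hq' | hq'
    · refine le_trans (min_le_left _ _) (le_trans step1 ?_)
      have e1 : 1 / (4 * (n₁:ℝ)) + 2 / ((n₁:ℝ) * ε₁) ^ 2 = R / (4 * (n₁:ℝ)) := by
        simp only [R]; field_simp; ring
      rw [e1]
      gcongr
      have hqR : (0:ℝ) < (n₂:ℝ) * R := by positivity
      linarith
    · refine le_trans (min_le_right _ _) ?_
      have hRe : (n₁:ℝ) * (R * ε₁ ^ 2) = (n₁:ℝ) * ε₁ ^ 2 + 8 := by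
        simp only [R]; field_simp
      have h2 : (R * ε₁) ^ 2 ≤ ε₂ ^ 2 := by nlinarith [mul_pos hR hε₁]
      have h2' : (n₂:ℝ) * (R * ε₁) ^ 2 ≤ (n₂:ℝ) * ε₂ ^ 2 :=
        mul_le_mul_of_nonneg_left h2 hq.le
      have hstep : (n₁:ℝ) * (R * ε₁ ^ 2) ≤ (n₂:ℝ) * R * (R * ε₁ ^ 2) :=
        mul_le_mul_of_nonneg_right hq' (by positivity)
      have ee : (n₂:ℝ) * (R * ε₁) ^ 2 = (n₂:ℝ) * R * (R * ε₁ ^ 2) := by ring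
      have ht8 : (8:ℝ) ≤ (n₂:ℝ) * ε₂ ^ 2 := by
        have := mul_nonneg hp.le (sq_nonneg ε₁)
        linarith
      have hy : 2 / ((n₂:ℝ) * ε₂) ^ 2 ≤ 1 / (4 * (n₂:ℝ)) := by
        rw [div_le_div_iff₀ (by positivity) (by positivity)]
        have e3 : ((n₂:ℝ) * ε₂) ^ 2 = (n₂:ℝ) * ((n₂:ℝ) * ε₂ ^ 2) := by ring
        have := mul_le_mul_of_nonneg_left ht8 hq.le
        linarith
      have hlast : 1 / (2 * (n₂:ℝ)) ≤ R / ((n₁:ℝ) + (n₂:ℝ) * R) := by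
        rw [div_le_div_iff₀ (by positivity) hX]
        have e4 : R * (2 * (n₂:ℝ)) = 2 * ((n₂:ℝ) * R) := by ring
        linarith
      calc 1 / (4 * (n₂:ℝ)) + 2 / ((n₂:ℝ) * ε₂) ^ 2
          ≤ 1 / (4 * (n₂:ℝ)) + 1 / (4 * (n₂:ℝ)) := by linarith
        _ = 1 / (2 * (n₂:ℝ)) := by field_simp; ring
        _ ≤ R / ((n₁:ℝ) + (n₂:ℝ) * R) := hlast
end

section
/- Let m ≥ 2 be an integer, εᵢ = 2^{-(i-1)}, nᵢ = 2^{i-1} for i ∈ [m]. Define MSE_aff_bound = (1/4)·Σᵢ nᵢ(εᵢ/m)² + 2/m² and MSE_thr_bound = min over g ∈ {0,...,m-1} of 2/((2^{g+1}-1)·2^{-g})². Then MSE_aff_bound ≤ 5/(2m²), MSE_thr_bound ≥ 1/2, and therefore MSE_thr_bound / MSE_aff_bound ≥ m²/5. -/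
theorem lower_bound_equal_revenue (m : ℕ) (hm : 2 ≤ m) :
    let MSEaffBound : ℝ :=
      (1 / 4) * ∑ i ∈ Finset.range m, (2 : ℝ) ^ i * ((1 / 2 : ℝ) ^ i / (m : ℝ)) ^ 2
        + 2 / (m : ℝ) ^ 2
    let MSEthrBound : ℝ :=
      (Finset.range m).inf' (Finset.nonempty_range_iff.mpr (by omega))
        (fun g => 2 / (((2 : ℝ) ^ (g + 1) - 1) * (1 / 2 : ℝ) ^ g) ^ 2)
    MSEaffBound ≤ 5 / (2 * (m : ℝ) ^ 2) ∧
    (1 / 2 : ℝ) ≤ MSEthrBound ∧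
    (m : ℝ) ^ 2 / 5 ≤ MSEthrBound / MSEaffBound := by
  intro A T
  have hm0 : (0 : ℝ) < (m : ℝ) := by positivity
  have hm2 : (0 : ℝ) < (m : ℝ) ^ 2 := by positivity
  -- rewrite each term of the sum
  have hterm : ∀ i : ℕ, (2 : ℝ) ^ i * ((1 / 2 : ℝ) ^ i / (m : ℝ)) ^ 2
      = (1 / 2 : ℝ) ^ i / (m : ℝ) ^ 2 := by
    intro i
    have h2 : ((1 / 2 : ℝ)) ^ i = ((2 : ℝ) ^ i)⁻¹ := by
      rw [one_div, inv_pow]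
    rw [h2]
    have hp : (0 : ℝ) < (2 : ℝ) ^ i := by positivity
    field_simp
  have hsum : ∑ i ∈ Finset.range m, (2 : ℝ) ^ i * ((1 / 2 : ℝ) ^ i / (m : ℝ)) ^ 2
      = (∑ i ∈ Finset.range m, (1 / 2 : ℝ) ^ i) / (m : ℝ) ^ 2 := by
    rw [Finset.sum_div]
    exact Finset.sum_congr rfl fun i _ => hterm i
  have hgeom : ∑ i ∈ Finset.range m, (1 / 2 : ℝ) ^ i ≤ 2 := by
    have := geom_sum_eq (by norm_num : (1 / 2 : ℝ) ≠ 1) m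
    rw [this]
    have h1 : (0 : ℝ) ≤ (1 / 2 : ℝ) ^ m := by positivity
    have : ((1 / 2 : ℝ) ^ m - 1) / (1 / 2 - 1) = 2 * (1 - (1 / 2 : ℝ) ^ m) := by
      ring
    rw [this]; nlinarith
  have hsumpos : (0 : ℝ) < ∑ i ∈ Finset.range m, (1 / 2 : ℝ) ^ i := by
    apply Finset.sum_pos (fun i _ => by positivity)
    exact Finset.nonempty_range_iff.mpr (by omega)
  have hA : A ≤ 5 / (2 * (m : ℝ) ^ 2) := by
    show (1 / 4) * _ + 2 / (m : ℝ) ^ 2 ≤ _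
    rw [hsum]
    have e1 : (1 / 4 : ℝ) * ((∑ i ∈ Finset.range m, (1 / 2 : ℝ) ^ i) / (m : ℝ) ^ 2)
        + 2 / (m : ℝ) ^ 2
        = ((1 / 4) * (∑ i ∈ Finset.range m, (1 / 2 : ℝ) ^ i) + 2) / (m : ℝ) ^ 2 := by
      ring
    have e2 : (5 : ℝ) / (2 * (m : ℝ) ^ 2) = (5 / 2) / (m : ℝ) ^ 2 := by ring
    rw [e1, e2]
    gcongr
    linarith
  have hApos : 0 < A := by
    show 0 < (1 / 4) * _ + 2 / (m : ℝ) ^ 2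
    rw [hsum]; positivity
  have hT : (1 / 2 : ℝ) ≤ T := by
    apply Finset.le_inf'
    intro g _
    have h1 : (1 : ℝ) ≤ (2 : ℝ) ^ g := one_le_pow₀ (by norm_num : (1:ℝ) ≤ 2)
    have hx : ((2 : ℝ) ^ (g + 1) - 1) * (1 / 2 : ℝ) ^ g = 2 - ((2 : ℝ) ^ g)⁻¹ := by
      rw [one_div, inv_pow, pow_succ]
      field_simp
    rw [hx]
    have hinv : (0 : ℝ) < ((2 : ℝ) ^ g)⁻¹ := by positivity
    have hinv1 : ((2 : ℝ) ^ g)⁻¹ ≤ 1 := by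
      rw [inv_le_one_iff₀]; right; exact h1
    have hxpos : (0 : ℝ) < 2 - ((2 : ℝ) ^ g)⁻¹ := by linarith
    rw [le_div_iff₀ (by positivity)]
    nlinarith
  clear_value A T
  refine ⟨hA, hT, ?_⟩
  have hA' : A * (2 * (m : ℝ) ^ 2) ≤ 5 := by
    rw [le_div_iff₀ (by positivity)] at hA
    exact hA
  have h1 : (m : ℝ) ^ 2 / 5 ≤ (1 / 2) / A := by
    rw [div_le_div_iff₀ (by norm_num) hApos]
    calc (m : ℝ) ^ 2 * A = A * (2 * (m : ℝ) ^ 2) / 2 := by ring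
      _ ≤ 5 / 2 := by linarith
      _ = 1 / 2 * 5 := by norm_num
  calc (m : ℝ) ^ 2 / 5 ≤ (1 / 2) / A := h1
    _ ≤ T / A := by gcongr
end

section
/- Let ε⁽¹⁾ ≤ ... ≤ ε⁽ⁿ⁾ be a nondecreasing sequence of positive reals taking at most m distinct values, and define u_j = (n - j + 1)·ε⁽ʲ⁾ and U = max_j u_j. Then Σⱼ ε⁽ʲ⁾ ≤ m · U. -/
theorem pigeonhole_comparison (n m : ℕ) (hn : 0 < n) (ε : Fin n → ℝ)
    (hpos : ∀ j, 0 < ε j) (hmono : Monotone ε)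
    (hdistinct : (Finset.univ.image ε).card ≤ m) :
    let u : Fin n → ℝ := fun j => ((n : ℝ) - (j : ℕ)) * ε j
    let U : ℝ := Finset.univ.sup' (Finset.univ_nonempty_iff.mpr ⟨⟨0, hn⟩⟩) u
    (∑ j, ε j) ≤ (m : ℝ) * U := by
  intro u U
  have hne : (Finset.univ : Finset (Fin n)).Nonempty := Finset.univ_nonempty_iff.mpr ⟨⟨0, hn⟩⟩
  have hUge : ∀ j : Fin n, u j ≤ U := fun j => Finset.le_sup' u (Finset.mem_univ j)
  have hU0 : 0 ≤ U := by
    refine le_trans ?_ (hUge ⟨0, hn⟩)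
    have h1 : (0:ℝ) < (n:ℝ) - ((⟨0,hn⟩ : Fin n) : ℕ) := by
      simp only [Fin.val_mk, Nat.cast_zero, sub_zero]
      exact_mod_cast hn
    exact le_of_lt (mul_pos h1 (hpos _))
  -- decompose sum into fibers
  have hdecomp : (∑ j, ε j) =
      ∑ v ∈ Finset.univ.image ε, ∑ j ∈ Finset.univ.filter (fun j => ε j = v), ε j := by
    rw [Finset.sum_fiberwise_of_maps_to (fun x _ => Finset.mem_image_of_mem ε (Finset.mem_univ x))]
  rw [hdecomp]
  have hbound : ∀ v ∈ Finset.univ.image ε,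
      (∑ j ∈ Finset.univ.filter (fun j => ε j = v), ε j) ≤ U := by
    intro v hv
    set S := Finset.univ.filter (fun j => ε j = v) with hS
    have hSne : S.Nonempty := by
      obtain ⟨j, _, hj⟩ := Finset.mem_image.mp hv
      exact ⟨j, by simp [hS, hj]⟩
    set j := S.min' hSne with hj
    have hjS : j ∈ S := S.min'_mem hSne
    have hjv : ε j = v := (Finset.mem_filter.mp hjS).2
    have hsum : (∑ i ∈ S, ε i) = (S.card : ℝ) * v := by
      rw [Finset.sum_congr rfl (fun i hi => (Finset.mem_filter.mp hi).2)]
      rw [Finset.sum_const, nsmul_eq_mul]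
    rw [hsum]
    have hsub : S ⊆ Finset.Ici j := fun i hi => Finset.mem_Ici.mpr (S.min'_le i hi)
    have hcard : S.card ≤ n - (j : ℕ) := by
      calc S.card ≤ (Finset.Ici j).card := Finset.card_le_card hsub
        _ = n - (j : ℕ) := Fin.card_Ici j
    have hvpos : 0 < v := hjv ▸ hpos j
    calc (S.card : ℝ) * v ≤ ((n - (j:ℕ) : ℕ) : ℝ) * v := by
          exact mul_le_mul_of_nonneg_right (by exact_mod_cast hcard) (le_of_lt hvpos)
      _ = ((n:ℝ) - (j:ℕ)) * ε j := by
          rw [hjv, Nat.cast_sub (le_of_lt j.isLt)]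
      _ ≤ U := hUge j
  calc (∑ v ∈ Finset.univ.image ε, ∑ j ∈ Finset.univ.filter (fun j => ε j = v), ε j)
      ≤ ∑ _v ∈ Finset.univ.image ε, U := Finset.sum_le_sum hbound
    _ = ((Finset.univ.image ε).card : ℝ) * U := by rw [Finset.sum_const, nsmul_eq_mul]
    _ ≤ (m : ℝ) * U := mul_le_mul_of_nonneg_right (by exact_mod_cast hdistinct) hU0
end

section
/- Let ε⁽¹⁾, ..., ε⁽ⁿ⁾ be positive reals taking at most m distinct values, with harmonic number H_n = Σ_{k=1}^n 1/k. Set s = Σⱼ ε⁽ʲ⁾ and q = Σⱼ (ε⁽ʲ⁾)². Then there exists ε* > 0 with n* := |{j : ε⁽ʲ⁾ ≥ ε*}| ≥ 1 such that 1/(4n*) + 2/(ε*·n*)² ≤ min(m², H_n²) · (q/(4s²) + 2/s²). -/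
/-!
Let `N(v) = #{j | v ≤ ε j}` and pick `ε* = ε i₀` maximising `ε i * N(ε i)`; write `n* = N(ε*)`.
Then `q ≥ n* ε*²`, since `n*` terms of `q` are at least `ε*²`. For the budget, grouping the terms
of `s` by value gives `s ≤ m ε* n*`, and listing the `ε j` in decreasing order, the `k`-th largest
`v` has `N(v) ≥ k`, hence is at most `ε* n* / k`, so `s ≤ H_n ε* n*`. With these two bounds each
term of the threshold MSE is dominated by the corresponding term of the affine MSE.
-/

open Finset

section CountAbove

variable {ι : Type*} [Fintype ι] {ε : ι → ℝ} {M : ℝ}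

theorem card_filter_le_mul_sq_le_sum_sq {t : ℝ} (ht : 0 ≤ t) :
    (#{j | t ≤ ε j} : ℝ) * t ^ 2 ≤ ∑ j, ε j ^ 2 := by
  rw [← nsmul_eq_mul]
  calc #{j | t ≤ ε j} • t ^ 2 ≤ ∑ j with t ≤ ε j, ε j ^ 2 :=
        card_nsmul_le_sum _ _ _ fun j hj => pow_le_pow_left₀ ht (mem_filter.1 hj).2 2
    _ ≤ ∑ j, ε j ^ 2 := sum_le_sum_of_subset_of_nonneg (filter_subset _ _) fun j _ _ => sq_nonneg _

theorem sum_le_card_image_mul (h0 : ∀ j, 0 ≤ ε j) (hM : ∀ j, ε j * #{i | ε j ≤ ε i} ≤ M) :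
    ∑ j, ε j ≤ #(univ.image ε) * M := by
  rw [← sum_fiberwise_of_maps_to (fun j _ => mem_image_of_mem ε (mem_univ j)), ← nsmul_eq_mul]
  refine sum_le_card_nsmul _ _ _ fun v hv => ?_
  obtain ⟨j, -, rfl⟩ := mem_image.1 hv
  calc ∑ i with ε i = ε j, ε i = #{i | ε i = ε j} * ε j := by
        rw [sum_congr rfl fun i hi => (mem_filter.1 hi).2, sum_const, nsmul_eq_mul]
    _ ≤ #{i | ε j ≤ ε i} * ε j := by
        gcongr with i
        · exact h0 j
        · exact ge_of_eq
    _ ≤ M := by rw [mul_comm]; exact hM j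

end CountAbove

theorem sum_le_harmonic_mul_of_mul_sub_le {n : ℕ} {g : Fin n → ℝ} {M : ℝ}
    (h : ∀ k : Fin n, g k * (n - k : ℕ) ≤ M) :
    ∑ k, g k ≤ (∑ k ∈ range n, (1 : ℝ) / (k + 1)) * M := by
  have hpos (k : Fin n) : (0 : ℝ) < (n - k : ℕ) := Nat.cast_pos.2 (Nat.sub_pos_of_lt k.isLt)
  calc ∑ k, g k ≤ ∑ k : Fin n, M / (n - k : ℕ) :=
        sum_le_sum fun k _ => (le_div_iff₀ (hpos k)).2 (h k)
    _ = ∑ k : Fin n, M / ((k : ℕ) + 1) := by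
        rw [← Equiv.sum_comp Fin.revPerm]
        refine sum_congr rfl fun k _ => ?_
        rw [Fin.revPerm_apply, Fin.val_rev, Nat.sub_sub_self (by omega)]
        push_cast; rfl
    _ = (∑ k ∈ range n, (1 : ℝ) / (k + 1)) * M := by
        rw [Fin.sum_univ_eq_sum_range (fun k => M / ((k : ℝ) + 1)), sum_mul]
        exact sum_congr rfl fun k _ => by ring

theorem Tuple.sub_le_card_filter_sort {n : ℕ} {α : Type*} [LinearOrder α] (f : Fin n → α)
    (k : Fin n) : n - k ≤ #{j | f (Tuple.sort f k) ≤ f j} := by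
  rw [← Fin.card_Ici]
  refine card_le_card_of_injOn (Tuple.sort f) (fun i hi => ?_) (Tuple.sort f).injective.injOn
  simpa using Tuple.monotone_sort f (mem_Ici.1 hi)

theorem sum_le_harmonic_mul {n : ℕ} {ε : Fin n → ℝ} {M : ℝ} (h0 : ∀ j, 0 ≤ ε j)
    (hM : ∀ j, ε j * #{i | ε j ≤ ε i} ≤ M) :
    ∑ j, ε j ≤ (∑ k ∈ range n, (1 : ℝ) / (k + 1)) * M := by
  rw [← Equiv.sum_comp (Tuple.sort ε)]
  refine sum_le_harmonic_mul_of_mul_sub_le fun k => ?_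
  calc ε (Tuple.sort ε k) * (n - k : ℕ)
      ≤ ε (Tuple.sort ε k) * #{i | ε (Tuple.sort ε k) ≤ ε i} :=
        mul_le_mul_of_nonneg_left (mod_cast Tuple.sub_le_card_filter_sort ε k) (h0 _)
    _ ≤ M := hM _

theorem threshold_mse_le_affine_mse {e c s q B : ℝ} (he : 0 < e) (hc : 0 < c) (hs : 0 < s)
    (hbudget : s ^ 2 ≤ B * (e * c) ^ 2) (hq : c * e ^ 2 ≤ q) :
    1 / (4 * c) + 2 / (e * c) ^ 2 ≤ B * (q / (4 * s ^ 2) + 2 / s ^ 2) := by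
  have hB : 0 ≤ B := by
    by_contra! hB
    nlinarith [mul_pos he hc, mul_neg_of_neg_of_pos hB (pow_pos (mul_pos he hc) 2)]
  have h1 : 1 / (4 * c) ≤ B * q / (4 * s ^ 2) := by
    rw [div_le_div_iff₀ (by positivity) (by positivity)]
    nlinarith [mul_le_mul_of_nonneg_left hq (mul_nonneg hB hc.le)]
  have h2 : 2 / (e * c) ^ 2 ≤ B * 2 / s ^ 2 := by
    rw [div_le_div_iff₀ (by positivity) (by positivity)]
    nlinarith
  calc _ ≤ B * q / (4 * s ^ 2) + B * 2 / s ^ 2 := add_le_add h1 h2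
    _ = _ := by ring

theorem threshold_vs_affine_comparison (n m : ℕ) (hn : 0 < n) (ε : Fin n → ℝ)
    (hpos : ∀ j, 0 < ε j) (hdistinct : (Finset.univ.image ε).card ≤ m) :
    let Hn : ℝ := ∑ k ∈ Finset.range n, (1 : ℝ) / (k + 1)
    let s : ℝ := ∑ j, ε j
    let q : ℝ := ∑ j, (ε j) ^ 2
    ∃ εstar : ℝ, 0 < εstar ∧
      0 < (Finset.univ.filter fun j => εstar ≤ ε j).card ∧
      1 / (4 * ((Finset.univ.filter fun j => εstar ≤ ε j).card : ℝ))
        + 2 / (εstar * ((Finset.univ.filter fun j => εstar ≤ ε j).card : ℝ)) ^ 2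
      ≤ min ((m : ℝ) ^ 2) (Hn ^ 2) * (q / (4 * s ^ 2) + 2 / s ^ 2) := by
  intro Hn s q
  have : Nonempty (Fin n) := ⟨⟨0, hn⟩⟩
  obtain ⟨i₀, -, hmax⟩ := exists_max_image univ (fun i => ε i * #{j | ε i ≤ ε j}) univ_nonempty
  have hM (i : Fin n) := hmax i (mem_univ i)
  have h0 (j : Fin n) := (hpos j).le
  have hcard : 0 < #{j | ε i₀ ≤ ε j} := card_pos.2 ⟨i₀, by simp⟩
  have hs : 0 < s := sum_pos (fun j _ => hpos j) univ_nonempty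
  refine ⟨ε i₀, hpos i₀, hcard, threshold_mse_le_affine_mse (hpos i₀) (mod_cast hcard) hs ?_
    (card_filter_le_mul_sq_le_sum_sq (h0 i₀))⟩
  rw [min_mul_of_nonneg _ _ (sq_nonneg _), ← mul_pow, ← mul_pow]
  have hs_m : s ≤ m * (ε i₀ * #{j | ε i₀ ≤ ε j}) :=
    (sum_le_card_image_mul h0 hM).trans <| mul_le_mul_of_nonneg_right (mod_cast hdistinct)
      (mul_nonneg (h0 i₀) (Nat.cast_nonneg _))
  exact le_min (pow_le_pow_left₀ hs.le hs_m 2)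
    (pow_le_pow_left₀ hs.le (sum_le_harmonic_mul h0 hM) 2)
end
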